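/- With (V,d) the d.g. module where V_p = span(x_{2p−1},x_{2p}) for p ≥ 1 and d: x_{6i−3} ↦ x_{6i−5}, the deformation with infinitesimal d_1 = x_1 ∂/∂x_4 + ∑_{i=1}^{n−1} x_{6i−2} ∂/∂x_{6i} is non-trivial: there is no 0-cochain φ_1 with dφ_1 − φ_1 d = −d_1. Consequently no equivalence between this deformation and the trivial one exists. -/
import Mathlib


open Finset

/-- The k[[t]]-linear extension to V[[t]] ≅ (ℕ → V) of a formal power series
`∑ tⁱ D i` of k-linear endomorphisms of `V` (Cauchy-product action on coefficients). -/
noncomputable def ext {k V : Type*} [Field k] [AddCommGroup V] [Module k V]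
    (D : ℕ → Module.End k V) : Module.End k (ℕ → V) where
  toFun v n := ∑ i ∈ Finset.range (n + 1), D i (v (n - i))
  map_add' u v := by
    funext n
    simp [Finset.sum_add_distrib]
  map_smul' c v := by
    funext n
    simp [Finset.smul_sum]

/-- The trivial deformation `d_t = d` of a differential `d`. -/
noncomputable def trivDef {k V : Type*} [Field k] [AddCommGroup V] [Module k V]
    (d : Module.End k V) : ℕ → Module.End k V :=
  fun n => if n = 0 then d else 0

/-- Equivalence of deformations: a k[[t]]-linear automorphism `φ_t` of `V[[t]]` with
`φ_t ≡ Id (mod t)` and `d_t φ_t = φ_t d_t'`. -/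
def IsEquivDef {k V : Type*} [Field k] [AddCommGroup V] [Module k V]
    (D D' : ℕ → Module.End k V) : Prop :=
  ∃ Φ : ℕ → Module.End k V, Φ 0 = 1 ∧ Function.Bijective (ext Φ) ∧
    ext D * ext Φ = ext Φ * ext D'

/-- The basis vector `x_i` of the graded module `V = ⊕_{p≥1} ⟨x_{2p-1}, x_{2p}⟩`,
modelled inside `ℕ →₀ k` (only indices `i ≥ 1` are used). -/
noncomputable def xv (k : Type*) [Field k] (i : ℕ) : ℕ →₀ k := Finsupp.single i 1

/-- The elementary operator `x_i ∂/∂x_j`, sending `x_j ↦ x_i` and all other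
basis vectors to `0`. -/
noncomputable def Elem (k : Type*) [Field k] (i j : ℕ) : Module.End k (ℕ →₀ k) :=
  (Finsupp.lsingle i).comp (Finsupp.lapply j)

/-- The degree-`p` homogeneous piece `V_p = ⟨x_{2p-1}, x_{2p}⟩` (and `V_p = 0` for `p ≤ 0`). -/
noncomputable def piece (k : Type*) [Field k] (p : ℕ) : Submodule k (ℕ →₀ k) :=
  if p = 0 then ⊥ else Submodule.span k {xv k (2 * p - 1), xv k (2 * p)}

lemma ext_apply {k V : Type*} [Field k] [AddCommGroup V] [Module k V]
    (D : ℕ → Module.End k V) (v : ℕ → V) (m : ℕ) :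
    ext D v m = ∑ i ∈ Finset.range (m + 1), D i (v (m - i)) := rfl

/-- With `d : x_{6i-3} ↦ x_{6i-5}` and infinitesimal
`d_1 = x_1 ∂/∂x_4 + ∑_{i=1}^{n-1} x_{6i-2} ∂/∂x_{6i}`, there is no 0-cochain `φ_1` with
`d φ_1 - φ_1 d = -d_1`; consequently no deformation of `d` with this infinitesimal is
equivalent to the trivial deformation. -/
theorem example_deformation_nontrivial {k : Type*} [Field k] (n : ℕ) (hn : 2 ≤ n)
    (d d1 : Module.End k (ℕ →₀ k))
    (hd : ∀ j : ℕ, d (xv k j) = if j % 6 = 3 then xv k (j - 2) else 0)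
    (hd1 : ∀ j : ℕ, d1 (xv k j) =
      if j = 4 then xv k 1
      else if j % 6 = 0 ∧ 6 ≤ j ∧ j ≤ 6 * (n - 1) then xv k (j - 2)
      else 0) :
    (¬ ∃ φ : Module.End k (ℕ →₀ k), d * φ - φ * d = -d1) ∧
    (∀ D : ℕ → Module.End k (ℕ →₀ k), D 0 = d → D 1 = d1 →
      ext D * ext D = 0 → ¬ IsEquivDef D (trivDef d)) := by
  have h4 : ∀ v : ℕ →₀ k, d v 4 = 0 := by
    have hL : (Finsupp.lapply (M := k) (R := k) 4).comp d = 0 := by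
      apply Finsupp.lhom_ext
      intro j c
      have hc : Finsupp.single j c = c • xv k j := by
        simp [xv, Finsupp.smul_single]
      simp only [LinearMap.comp_apply, Finsupp.lapply_apply, LinearMap.zero_apply, hc,
        map_smul, hd j]
      by_cases hj : j % 6 = 3
      · have hne : j - 2 ≠ 4 := by omega
        simp [hj, xv, Finsupp.single_apply, hne]
      · simp [hj]
    intro v
    exact DFunLike.congr_fun hL v
  have hkey : ¬ ∃ φ : Module.End k (ℕ →₀ k), d * φ - φ * d = -d1 := by
    rintro ⟨φ, hφ⟩
    have h6 := DFunLike.congr_fun hφ (xv k 6)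
    have hd6 : d (xv k 6) = 0 := by simpa using hd 6
    have hd16 : d1 (xv k 6) = xv k 4 := by
      rw [hd1 6]
      have : (6 : ℕ) % 6 = 0 ∧ 6 ≤ 6 ∧ 6 ≤ 6 * (n - 1) := ⟨rfl, le_refl 6, by omega⟩
      simp [this]
    simp only [LinearMap.sub_apply, Module.End.mul_apply, LinearMap.neg_apply, hd6,
      map_zero, sub_zero, hd16] at h6
    have := congrArg (fun f : ℕ →₀ k => f 4) h6
    simp only [h4, Finsupp.coe_neg, Pi.neg_apply] at this
    rw [show (xv k 4) 4 = 1 by simp [xv]] at this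
    exact one_ne_zero (neg_eq_zero.mp this.symm)
  refine ⟨hkey, ?_⟩
  rintro D hD0 hD1 - ⟨Φ, hΦ0, -, hmul⟩
  apply hkey
  refine ⟨Φ 1, ?_⟩
  apply LinearMap.ext; intro x
  have hv := congrFun (DFunLike.congr_fun hmul
    (fun m => if m = 0 then x else 0)) 1
  simp only [Module.End.mul_apply, ext_apply, trivDef, Finset.sum_range_succ,
    Finset.sum_range_zero, Nat.sub_self, hΦ0, hD0, hD1] at hv
  norm_num [hΦ0, hD0, hD1] at hv
  simp only [LinearMap.sub_apply, Module.End.mul_apply, LinearMap.neg_apply]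
  -- hv : d (Φ 1 x) + d1 x = Φ 1 (d x)  (roughly)
  linear_combination (norm := abel) hv
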